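/- Suppose an n-dimensional V-path of the vector field on Δ(β), β = [n+1], enters Δ(β) and subsequently exits through the (n−1)-simplex with label (I₁,…,I_n), where the blocks are singletons and I_j = {n+1}. Then the first simplex of Δ(β) occurring in this path is the (n−1)-simplex with label (I₁,…,I_{j−1}, I_{j+1},…,I_n, [n+1] ∖ (I₁ ∪ ⋯ ∪ I_n)). -/

import Mathlib

/-- An ordered partition of a finite set `S`: a list of pairwise disjoint nonempty
blocks whose union is `S`. -/
def IsOrderedPartition (S : Finset ℕ) (l : List (Finset ℕ)) : Prop :=
  (∀ I ∈ l, I.Nonempty) ∧ l.Pairwise Disjoint ∧ l.foldr (· ∪ ·) ∅ = S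

/-- The non-critical pairing (lower, higher) for a pair `(α, β)` with `β = α ∪ {v}`,
`A` the vertex set of `α`: rules 1/2 (append/delete the final singleton `{v}`) and
rules 3/4 (split `v` out leftward / merge the singleton `{v}` with the following block). -/
def NCPair (v : ℕ) (A : Finset ℕ) (p q : List (Finset ℕ)) : Prop :=
  (IsOrderedPartition A p ∧ q = p ++ [{v}]) ∨
  (∃ l I r, v ∉ I ∧ I.Nonempty ∧ p = l ++ (insert v I :: r) ∧ q = l ++ ({v} :: I :: r))

/-- `p` is the label of a facet (codimension-one face) of the simplex with label `q`:
either merge two adjacent blocks, or delete the last block. -/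
def LabelFacet (p q : List (Finset ℕ)) : Prop :=
  (∃ l I J r, q = l ++ (I :: J :: r) ∧ p = l ++ ((I ∪ J) :: r)) ∨ (∃ I, q = p ++ [I])

/-- A V-path `β₀, α₁, β₁, α₂, …, β_m, α_{m+1}` of a discrete vector field:
`upper i` is `β_i`, `lower i` is `α_{i+1}`; each `α_{i+1}` is a facet of `β_i`,
each `(α_i, β_i)` (for `1 ≤ i ≤ m`) is a pair of the field, and `αᵢ ≠ αᵢ₊₁`. -/
structure VPath {σ : Type} (Facet : σ → σ → Prop) (Pair : σ → σ → Prop) where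
  len : ℕ
  upper : ℕ → σ
  lower : ℕ → σ
  face_step : ∀ i ≤ len, Facet (lower i) (upper i)
  pair_step : ∀ i < len, Pair (lower i) (upper (i+1))
  lower_ne : ∀ i < len, lower i ≠ lower (i+1)

/-- The underlying sequence of simplexes of a V-path. -/
def pathList {σ : Type} {F P : σ → σ → Prop} (Γ : VPath F P) : List σ :=
  (List.range (Γ.len+1)).flatMap (fun i => [Γ.upper i, Γ.lower i])

/-- The length of the greatest common suffix of two lists of blocks. -/
def gcs (p q : List (Finset ℕ)) : ℕ :=
  ((p.reverse.zip q.reverse).takeWhile (fun x => x.1 == x.2)).length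

/-- The list `[n+1, n, …, 1]`. -/
def ordRev (n : ℕ) : List ℕ := (List.range (n+1)).map (fun i => n+1-i)

/-- The label `({n+1}, {n}, …, {1})` of the distinguished simplex `α'`. -/
def alphaPrime (n : ℕ) : List (Finset ℕ) := (ordRev n).map (fun a => ({a} : Finset ℕ))

/-- The critical pairing (lower, higher) relative to a chosen vertex order `o`
(so that `λ(α') = o.map singleton`): with `i` the length of the greatest common
suffix with `λ(α')` and `x` the entry occupying the `(i+1)`-st block from the end
of `λ(α')`, pair by splitting `x` out leftward / merging the singleton `{x}` with
the following block. -/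
def CritPair (o : List ℕ) (p q : List (Finset ℕ)) : Prop :=
  ∃ x l I r, (o.reverse)[gcs q (o.map (fun a => ({a} : Finset ℕ)))]? = some x ∧
    x ∉ I ∧ I.Nonempty ∧ p = l ++ (insert x I :: r) ∧ q = l ++ ({x} :: I :: r)

lemma mem_foldr_union {x : ℕ} {l : List (Finset ℕ)} :
    x ∈ l.foldr (· ∪ ·) ∅ ↔ ∃ I ∈ l, x ∈ I := by
  induction l with
  | nil => simp
  | cons a l ih => simp [ih]

lemma uniq_block {v : ℕ} : ∀ (l₁ l₂ : List (Finset ℕ)) {X Y : Finset ℕ} {r₁ r₂ : List (Finset ℕ)},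
    l₁ ++ X :: r₁ = l₂ ++ Y :: r₂ → v ∈ X → v ∈ Y →
    (∀ I ∈ l₁, v ∉ I) → (∀ I ∈ l₂, v ∉ I) →
    l₁ = l₂ ∧ X = Y ∧ r₁ = r₂ := by
  intro l₁
  induction l₁ with
  | nil =>
    intro l₂ X Y r₁ r₂ h hX hY h1 h2
    cases l₂ with
    | nil => simpa using h
    | cons b l₂ =>
      simp only [List.nil_append, List.cons_append, List.cons.injEq] at h
      exact absurd (h.1 ▸ hX) (h2 b (by simp))
  | cons a l₁ ih =>
    intro l₂ X Y r₁ r₂ h hX hY h1 h2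
    cases l₂ with
    | nil =>
      simp only [List.nil_append, List.cons_append, List.cons.injEq] at h
      exact absurd (h.1.symm ▸ hY) (h1 a (by simp))
    | cons b l₂ =>
      simp only [List.cons_append, List.cons.injEq] at h
      obtain ⟨rfl, h⟩ := h
      obtain ⟨h1', h2', h3'⟩ := ih l₂ h hX hY (fun I hI => h1 I (by simp [hI]))
        (fun I hI => h2 I (by simp [hI]))
      exact ⟨by rw [h1'], h2', h3'⟩

lemma prefix_not_mem {v : ℕ} {l₂ r₂ : List (Finset ℕ)} {X : Finset ℕ}
    (hp : (l₂ ++ X :: r₂).Pairwise Disjoint) (hv : v ∈ X) : ∀ I ∈ l₂, v ∉ I := by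
  intro I hI hvI
  rw [List.pairwise_append] at hp
  exact Finset.disjoint_left.mp (hp.2.2 I hI X (by simp)) hvI hv

/-- Suppose an `n`-dimensional V-path of the non-critical field enters `Δ(β)`,
`β = [n+1]`, through a boundary `(n-1)`-simplex (a partition of `[n]`) and exits
through the boundary `(n-1)`-simplex with label `(I₁,…,I_n)` consisting of singletons
with `I_j = {n+1}`, the `β`-simplexes of the path being interior `n`-simplexes.
Then the first simplex of `Δ(β)` in the path is the `(n-1)`-simplex with label
`(I₁,…,I_{j-1}, I_{j+1},…,I_n, [n+1] ∖ (I₁ ∪ ⋯ ∪ I_n))`. -/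
theorem entry_simplex_determined (n : ℕ) (hn : 1 ≤ n)
    (e₁ e₂ : List (Finset ℕ))
    (hexit : ∃ S ⊆ Finset.Icc 1 (n+1),
      IsOrderedPartition S (e₁ ++ (({n+1} : Finset ℕ) :: e₂)))
    (hlen : (e₁ ++ (({n+1} : Finset ℕ) :: e₂)).length = n)
    (hsing : ∀ I ∈ e₁ ++ (({n+1} : Finset ℕ) :: e₂), I.card = 1)
    (P : VPath LabelFacet (NCPair (n+1) (Finset.Icc 1 n)))
    (hentry : IsOrderedPartition (Finset.Icc 1 n) (P.lower 0))
    (hupper : ∀ i, 1 ≤ i → i ≤ P.len → IsOrderedPartition (Finset.Icc 1 (n+1)) (P.upper i))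
    (hinner : ∀ i, 0 < i → i < P.len →
      IsOrderedPartition (Finset.Icc 1 (n+1)) (P.lower i))
    (hlenpos : 0 < P.len)
    (hend : P.lower P.len = e₁ ++ (({n+1} : Finset ℕ) :: e₂)) :
    P.lower 0 = (e₁ ++ e₂) ++
      [Finset.Icc 1 (n+1) \ ((e₁ ++ (({n+1} : Finset ℕ) :: e₂)).foldr (· ∪ ·) ∅)] := by
  obtain ⟨S, hSsub, hpartS⟩ := hexit
  set p := P.lower 0 with hp
  set k := p.length with hk
  have hvA : (n+1) ∉ (Finset.Icc 1 n) := by simp [Finset.mem_Icc]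
  have hvB : (n+1) ∈ (Finset.Icc 1 (n+1)) := by simp [Finset.mem_Icc]
  have hp0 : ∀ I ∈ p, (n+1) ∉ I := by
    intro I hI hvI
    apply hvA
    rw [← hentry.2.2]
    exact mem_foldr_union.mpr ⟨I, hI, hvI⟩
  have htk : ∀ m, ∀ I ∈ p.take m, (n+1) ∉ I := fun m I hI => hp0 I (List.take_subset m p hI)
  have hdr : ∀ m, ∀ I ∈ p.drop m, (n+1) ∉ I := fun m I hI => hp0 I (List.drop_subset m p hI)
  have hpne : p ≠ [] := by
    intro h
    have h1 : (1:ℕ) ∈ (Finset.Icc 1 n) := by simp [Finset.mem_Icc]; omega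
    rw [← hentry.2.2, h] at h1
    simp at h1
  have hkpos : 0 < k := List.length_pos_iff.mpr hpne
  -- main invariant
  have key : ∀ i, 1 ≤ i → i ≤ P.len →
      i ≤ k + 1 ∧
      P.upper i = p.take (k+1-i) ++ ({(n+1)} : Finset ℕ) :: p.drop (k+1-i) ∧
      (2 ≤ i → P.lower (i-1) =
        p.take (k+1-i) ++ (({(n+1)} : Finset ℕ) ∪ p.getD (k+1-i) ∅) :: p.drop (k+2-i)) := by
    intro i h1
    induction i, h1 using Nat.le_induction with
    | base =>
      intro _
      refine ⟨by omega, ?_, ?_⟩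
      · rcases P.pair_step 0 hlenpos with ⟨-, hq⟩ | ⟨l, I, r, hvI, hIne, hpeq, -⟩
        · rw [hq, ← hp]
          have e1 : k + 1 - 1 = k := by omega
          rw [e1, List.take_length, List.drop_length]
        · exfalso
          exact hp0 _ (by rw [hp, hpeq]; simp) (Finset.mem_insert_self (n+1) I)
      · intro h2; omega
    | succ i hi ih =>
      intro hilen
      have hilen' : i < P.len := hilen
      obtain ⟨hik, hup, hlowprev⟩ := ih (le_of_lt hilen')
      set j := k + 1 - i with hj
      have hjk : j ≤ k := by omega
      have hU : IsOrderedPartition (Finset.Icc 1 (n+1)) (P.upper i) := hupper i hi (le_of_lt hilen')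
      have hL : IsOrderedPartition (Finset.Icc 1 (n+1)) (P.lower i) := hinner i (by omega) hilen'
      -- the pair step in the two possible forms
      have hpairA : ¬ IsOrderedPartition (Finset.Icc 1 n) (P.lower i) := by
        intro hpart
        have hAB : (Finset.Icc 1 n) = (Finset.Icc 1 (n+1)) := hpart.2.2.symm.trans hL.2.2
        exact hvA (hAB ▸ hvB)
      rcases P.face_step i (le_of_lt hilen') with ⟨l', X, Y, r', hq, hlow⟩ | ⟨K, hq⟩
      · -- merge case
        rcases P.pair_step i hilen' with ⟨hpart, -⟩ | ⟨l, I, r, hvI, hIne, hpe, hqe⟩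
        · exact absurd hpart hpairA
        have hvblock : ∀ I ∈ l, (n+1) ∉ I := by
          have hpw := hL.2.1
          rw [hpe] at hpw
          exact prefix_not_mem hpw (Finset.mem_insert_self (n+1) I)
        by_cases hvX : (n+1) ∈ X
        · -- merge of {(n+1)} with its right neighbor: equals previous lower, contradiction
          have he : l' ++ X :: (Y :: r') = p.take j ++ ({(n+1)} : Finset ℕ) :: p.drop j := by
            rw [← hq, hup]
          have hpwU : ∀ I ∈ l', (n+1) ∉ I := by
            have hpw := hU.2.1
            rw [hq] at hpw
            exact prefix_not_mem hpw hvX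
          obtain ⟨hl', hX, hYr⟩ := uniq_block l' (p.take j) he hvX (Finset.mem_singleton_self (n+1))
            hpwU (htk j)
          have hjklt : j < k := by
            by_contra hcon
            have : p.drop j = [] := List.drop_eq_nil_of_le (by omega)
            rw [this] at hYr
            simp at hYr
          have hdropj : p.drop j = p[j] :: p.drop (j+1) := List.drop_eq_getElem_cons hjklt
          obtain ⟨hY, hr'⟩ : Y = p[j] ∧ r' = p.drop (j+1) := by
            rw [hdropj] at hYr
            exact List.cons_eq_cons.mp hYr
          have hi2 : 2 ≤ i := by omega
          have hprev := hlowprev hi2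
          have hloweq : P.lower (i-1) = P.lower i := by
            rw [hprev, hlow, hl', hX, hY, hr']
            have e : k + 2 - i = j + 1 := by omega
            rw [e, List.getD_eq_getElem p ∅ hjklt]
          have e1 : i - 1 + 1 = i := by omega
          exact absurd (e1 ▸ hloweq) (P.lower_ne (i-1) (by omega))
        by_cases hvY : (n+1) ∈ Y
        · -- the good case: merge of left neighbor with {(n+1)}
          have he : (l' ++ [X]) ++ Y :: r' = p.take j ++ ({(n+1)} : Finset ℕ) :: p.drop j := by
            rw [← hup, hq]; simp
          have hpwU : ∀ I ∈ l' ++ [X], (n+1) ∉ I := by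
            have hpw := hU.2.1
            rw [hq, show l' ++ X :: Y :: r' = (l' ++ [X]) ++ Y :: r' by simp] at hpw
            exact prefix_not_mem hpw hvY
          obtain ⟨hlX, hY, hr'⟩ := uniq_block (l' ++ [X]) (p.take j) he hvY
            (Finset.mem_singleton_self (n+1)) hpwU (htk j)
          have hj1 : 1 ≤ j := by
            by_contra hcon
            have : p.take j = [] := by
              have : j = 0 := by omega
              simp [this]
            rw [this] at hlX
            simp at hlX
          have hjlt : j - 1 < k := by omega
          have htakes : p.take (j-1) ++ [p[j-1]] = p.take j := by
            have := List.take_concat_get (show j - 1 < p.length from hjlt)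
            rw [List.concat_eq_append] at this
            rw [this]
            congr 1
            omega
          obtain ⟨hl'', hX⟩ : l' = p.take (j-1) ∧ X = p[j-1] := by
            have := List.append_inj' (hlX.trans htakes.symm) rfl
            simpa using this
          have hvpj : (n+1) ∉ p[j-1] := hp0 _ (List.getElem_mem hjlt)
          -- locate (n+1)'s block in lower i
          have he2 : l ++ insert (n+1) I :: r =
              p.take (j-1) ++ (p[j-1] ∪ ({(n+1)} : Finset ℕ)) :: p.drop j := by
            rw [← hpe, hlow, hl'', hX, hY, hr']
          obtain ⟨hleq, hIeq, hreq⟩ := uniq_block l (p.take (j-1)) he2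
            (Finset.mem_insert_self (n+1) I) (by simp) hvblock (htk (j-1))
          have hI : I = p[j-1] := by
            ext w
            have h1 : ∀ u, u ∈ insert (n+1) I ↔ u ∈ p[j-1] ∪ ({(n+1)} : Finset ℕ) := by
              intro u; rw [hIeq]
            constructor
            · intro hw
              rcases Finset.mem_union.mp ((h1 w).mp (Finset.mem_insert_of_mem hw)) with h | h
              · exact h
              · exact absurd (Finset.mem_singleton.mp h ▸ hw) hvI
            · intro hw
              rcases Finset.mem_insert.mp ((h1 w).mpr (Finset.mem_union_left _ hw)) with h | h
              · exact absurd (h ▸ hw) hvpj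
              · exact h
          refine ⟨by omega, ?_, ?_⟩
          · rw [hqe, hleq, hI, hreq]
            have e1 : k + 1 - (i+1) = j - 1 := by omega
            have e2 : p.drop (j-1) = p[j-1] :: p.drop j := by
              have := List.drop_eq_getElem_cons (l := p) hjlt
              rw [this]
              congr 2
              omega
            rw [e1, e2]
          · intro _
            have e1 : k + 1 - (i+1) = j - 1 := by omega
            have e2 : k + 2 - (i+1) = j := by omega
            have e3 : i + 1 - 1 = i := rfl
            rw [e3, e1, e2, hlow, hl'', hX, hY, hr',
              List.getD_eq_getElem p ∅ hjlt, Finset.union_comm]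
        · -- merge not involving (n+1): impossible
          exfalso
          have hmem : insert (n+1) I ∈ l' ++ (X ∪ Y) :: r' := by
            rw [← hlow, hpe]; simp
          have hvXY : (n+1) ∉ X ∪ Y := by simp [hvX, hvY]
          have hmemU : insert (n+1) I ∈ P.upper i := by
            rcases List.mem_append.mp hmem with h | h
            · rw [hq]; exact List.mem_append.mpr (Or.inl h)
            · rcases List.mem_cons.mp h with h | h
              · exact absurd (h ▸ Finset.mem_insert_self (n+1) I) hvXY
              · rw [hq]; simp [h]
          rw [hup] at hmemU
          obtain ⟨w, hw⟩ := hIne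
          rcases List.mem_append.mp hmemU with h | h
          · exact htk j _ h (Finset.mem_insert_self (n+1) I)
          · rcases List.mem_cons.mp h with h | h
            · have : w ∈ ({(n+1)} : Finset ℕ) := h ▸ Finset.mem_insert_of_mem hw
              exact hvI (Finset.mem_singleton.mp this ▸ hw)
            · exact hdr j _ h (Finset.mem_insert_self (n+1) I)
      · -- delete-last case: impossible for an inner step
        exfalso
        by_cases hD : p.drop j = []
        · have hjge : k ≤ j := by
            by_contra hcon
            rw [List.drop_eq_getElem_cons (l := p) (by omega)] at hD
            simp at hD
            omega
          have htake : p.take j = p := List.take_of_length_le (by omega)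
          have h2 : P.lower i ++ [K] = p ++ [({(n+1)} : Finset ℕ)] := by
            rw [← hq, hup, hD, htake]
          obtain ⟨hlowp, -⟩ : P.lower i = p ∧ ([K] : List (Finset ℕ)) = [{(n+1)}] :=
            List.append_inj' h2 rfl
          have hi1 : i = 1 := by omega
          exact P.lower_ne 0 hlenpos (by rw [← hp, ← hlowp, hi1])
        · obtain ⟨D', c, hD'⟩ : ∃ D' c, p.drop j = D' ++ [c] :=
            ⟨(p.drop j).dropLast, (p.drop j).getLast hD,
              (List.dropLast_append_getLast hD).symm⟩
          have h2 : P.lower i ++ [K] = (p.take j ++ ({(n+1)} : Finset ℕ) :: D') ++ [c] := by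
            rw [← hq, hup, hD']; simp
          obtain ⟨hlow2, -⟩ := List.append_inj' h2 rfl
          rcases P.pair_step i hilen' with ⟨hpart, -⟩ | ⟨l, I, r, hvI, hIne, hpe, -⟩
          · exact absurd hpart hpairA
          · have hvblock : ∀ J ∈ l, (n+1) ∉ J := by
              have hpw := hL.2.1
              rw [hpe] at hpw
              exact prefix_not_mem hpw (Finset.mem_insert_self (n+1) I)
            have he2 : l ++ insert (n+1) I :: r = p.take j ++ ({(n+1)} : Finset ℕ) :: D' := by
              rw [← hpe, hlow2]
            obtain ⟨-, hIeq, -⟩ := uniq_block l (p.take j) he2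
              (Finset.mem_insert_self (n+1) I) (Finset.mem_singleton_self (n+1)) hvblock (htk j)
            obtain ⟨w, hw⟩ := hIne
            have : w ∈ ({(n+1)} : Finset ℕ) := hIeq ▸ Finset.mem_insert_of_mem hw
            exact hvI (Finset.mem_singleton.mp this ▸ hw)
  -- conclusion: analyze the last facet step
  obtain ⟨-, hupl, -⟩ := key P.len hlenpos le_rfl
  set t := k + 1 - P.len with ht
  have hUlen : IsOrderedPartition (Finset.Icc 1 (n+1)) (P.upper P.len) := hupper P.len hlenpos le_rfl
  rcases P.face_step P.len le_rfl with ⟨l', X, Y, r', hq, hlow⟩ | ⟨K, hq⟩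
  · -- merge at exit: impossible since all exit blocks are singletons
    exfalso
    have hXmem : X ∈ P.upper P.len := by rw [hq]; simp
    have hYmem : Y ∈ P.upper P.len := by rw [hq]; simp
    have hXne : X.Nonempty := hUlen.1 X hXmem
    have hYne : Y.Nonempty := hUlen.1 Y hYmem
    have hdisj : Disjoint X Y := by
      have hpw := hUlen.2.1
      rw [hq] at hpw
      have := (List.pairwise_append.mp hpw).2.1
      exact (List.pairwise_cons.mp this).1 Y (by simp)
    have hcard : (X ∪ Y) ∈ e₁ ++ (({(n+1)} : Finset ℕ) :: e₂) := by
      rw [← hend, hlow]; simp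
    have h1 := hsing _ hcard
    have h2 : (X ∪ Y).card = X.card + Y.card := Finset.card_union_of_disjoint hdisj
    have := Finset.card_pos.mpr hXne
    have := Finset.card_pos.mpr hYne
    omega
  · -- delete-last at exit
    have h2 : e₁ ++ ({(n+1)} : Finset ℕ) :: (e₂ ++ [K]) = p.take t ++ ({(n+1)} : Finset ℕ) :: p.drop t := by
      rw [← hupl, hq, hend]; simp
    have hvblock : ∀ I ∈ e₁, (n+1) ∉ I := prefix_not_mem hpartS.2.1 (Finset.mem_singleton_self (n+1))
    obtain ⟨he₁, -, hrest⟩ := uniq_block e₁ (p.take t) h2 (Finset.mem_singleton_self (n+1))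
      (Finset.mem_singleton_self (n+1)) hvblock (htk t)
    have hpeq : p = e₁ ++ (e₂ ++ [K]) := by
      rw [he₁, hrest, List.take_append_drop]
    -- identify K
    have hKdisj : ∀ I ∈ e₁ ++ (({(n+1)} : Finset ℕ) :: e₂), Disjoint I K := by
      have hpw := hUlen.2.1
      rw [hq, hend] at hpw
      intro I hI
      exact (List.pairwise_append.mp hpw).2.2 I hI K (by simp)
    have hfold : (P.upper P.len).foldr (· ∪ ·) ∅ = (Finset.Icc 1 (n+1)) := hUlen.2.2
    have hK : K = (Finset.Icc 1 (n+1)) \ ((e₁ ++ (({(n+1)} : Finset ℕ) :: e₂)).foldr (· ∪ ·) ∅) := by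
      ext x
      simp only [Finset.mem_sdiff]
      constructor
      · intro hx
        refine ⟨?_, ?_⟩
        · rw [← hfold]
          exact mem_foldr_union.mpr ⟨K, by rw [hq]; simp, hx⟩
        · intro hcon
          obtain ⟨I, hI, hxI⟩ := mem_foldr_union.mp hcon
          exact Finset.disjoint_left.mp (hKdisj I hI) hxI hx
      · rintro ⟨hxB, hxn⟩
        rw [← hfold] at hxB
        obtain ⟨I, hI, hxI⟩ := mem_foldr_union.mp hxB
        rw [hq, hend] at hI
        rcases List.mem_append.mp hI with h | h
        · exact absurd (mem_foldr_union.mpr ⟨I, h, hxI⟩) hxn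
        · rw [List.mem_singleton.mp h] at hxI
          exact hxI
    rw [hpeq, hK]
    simp
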